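/- arXiv:2311.16619 — 6 statements merged into one kernel-verified Lean document; each statement's English description precedes it below -/
import Mathlib

section
/- Let (R,d) be a differential graded ring and S a multiplicatively closed subset of ker(d) satisfying the right Ore condition in R. Then ass(S) = {r ∈ R : ∃ s ∈ S, rs = 0} is a two-sided ideal of R that is closed under the differential d (i.e., a dg-ideal). -/
/-- A differential making a `ℤ`-graded ring into a differential graded ring:
an additive endomorphism of degree `1`, of square zero, satisfying the
(signed) Leibniz rule on homogeneous elements. -/
structure DGDifferential {R : Type*} [Ring R] (𝒜 : ℤ → AddSubgroup R) [GradedRing 𝒜] where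
  d : R →+ R
  d_mem : ∀ (i : ℤ) (x : R), x ∈ 𝒜 i → d x ∈ 𝒜 (i + 1)
  d_sq : ∀ x : R, d (d x) = 0
  leibniz : ∀ (i : ℤ) (a b : R), a ∈ 𝒜 i →
    d (a * b) = d a * b + ((-1 : ℤ) ^ i.natAbs) • (a * d b)

/-!
The right Ore condition lets one move an element of `S` past an arbitrary element of `R`:
given `r * s = 0` and any `y`, choose `y * s' = s * r'`, so that `r * y * s' = r * s * r' = 0`.
Together with closure of `S` under products this makes `ass S` a two-sided ideal. It is stable
under `d` because the Leibniz rule gives `d (r * s) = d r * s` whenever `d s = 0`.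
-/

section OreAnnihilator

variable {R : Type*} [Ring R] {S : Set R}

theorem exists_add_mul_eq_zero_of_ore (hS_mul : ∀ s ∈ S, ∀ t ∈ S, s * t ∈ S)
    (hOre : ∀ (r : R), ∀ s ∈ S, ∃ r' : R, ∃ s' ∈ S, r * s' = s * r')
    {x y s t : R} (hs : s ∈ S) (ht : t ∈ S) (hxs : x * s = 0) (hyt : y * t = 0) :
    ∃ u ∈ S, (x + y) * u = 0 := by
  obtain ⟨r', s', hs', hc⟩ := hOre t s hs
  refine ⟨t * s', hS_mul t ht s' hs', ?_⟩
  rw [add_mul, ← mul_assoc y, hyt, zero_mul, add_zero, hc, ← mul_assoc, hxs, zero_mul]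

theorem exists_mul_mul_eq_zero_of_ore
    (hOre : ∀ (r : R), ∀ s ∈ S, ∃ r' : R, ∃ s' ∈ S, r * s' = s * r')
    {x s : R} (hs : s ∈ S) (hxs : x * s = 0) (y : R) :
    ∃ u ∈ S, x * y * u = 0 := by
  obtain ⟨r', s', hs', hc⟩ := hOre y s hs
  exact ⟨s', hs', by rw [mul_assoc, hc, ← mul_assoc, hxs, zero_mul]⟩

/-- The ideal `ass S = {r | ∃ s ∈ S, r * s = 0}` of a right Ore set `S`. -/
def oreAnnihilator (S : Set R) (hS_ne : S.Nonempty) (hS_mul : ∀ s ∈ S, ∀ t ∈ S, s * t ∈ S)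
    (hOre : ∀ (r : R), ∀ s ∈ S, ∃ r' : R, ∃ s' ∈ S, r * s' = s * r') : TwoSidedIdeal R :=
  .mk' {r | ∃ s ∈ S, r * s = 0}
    (hS_ne.imp fun s hs => ⟨hs, zero_mul s⟩)
    (fun ⟨_, hs, hxs⟩ ⟨_, ht, hyt⟩ => exists_add_mul_eq_zero_of_ore hS_mul hOre hs ht hxs hyt)
    (fun ⟨s, hs, hxs⟩ => ⟨s, hs, by rw [neg_mul, hxs, neg_zero]⟩)
    (fun ⟨s, hs, hys⟩ => ⟨s, hs, by rw [mul_assoc, hys, mul_zero]⟩)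
    (fun ⟨_, hs, hxs⟩ => exists_mul_mul_eq_zero_of_ore hOre hs hxs _)

theorem mem_oreAnnihilator {hS_ne : S.Nonempty} {hS_mul : ∀ s ∈ S, ∀ t ∈ S, s * t ∈ S}
    {hOre : ∀ (r : R), ∀ s ∈ S, ∃ r' : R, ∃ s' ∈ S, r * s' = s * r'} {r : R} :
    r ∈ oreAnnihilator S hS_ne hS_mul hOre ↔ ∃ s ∈ S, r * s = 0 :=
  TwoSidedIdeal.mem_mk' _ _ _ _ _ _ r

end OreAnnihilator

namespace DGDifferential

variable {R : Type*} [Ring R] {𝒜 : ℤ → AddSubgroup R} [GradedRing 𝒜] (D : DGDifferential 𝒜)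

theorem d_mul_of_d_eq_zero {s : R} (hs : D.d s = 0) (r : R) : D.d (r * s) = D.d r * s := by
  induction r using DirectSum.Decomposition.inductionOn 𝒜 with
  | zero => simp
  | homogeneous a => rw [D.leibniz _ a s a.2, hs, mul_zero, smul_zero, add_zero]
  | add x y hx hy => rw [add_mul, map_add, hx, hy, map_add, add_mul]

theorem d_mul_eq_zero {r s : R} (hs : D.d s = 0) (hrs : r * s = 0) : D.d r * s = 0 := by
  rw [← D.d_mul_of_d_eq_zero hs, hrs, map_zero]

end DGDifferential

/-- if `S ⊆ ker d` is multiplicatively closed and satisfies the right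
Ore condition in `R`, then `ass S = {r | ∃ s ∈ S, r * s = 0}` is a two-sided ideal
of `R` closed under the differential `d`. -/
theorem ass_is_dg_ideal {R : Type*} [Ring R] (𝒜 : ℤ → AddSubgroup R) [GradedRing 𝒜]
    (D : DGDifferential 𝒜) (S : Set R)
    (hS_ne : S.Nonempty)
    (hS_ker : ∀ s ∈ S, D.d s = 0)
    (hS_mul : ∀ s ∈ S, ∀ t ∈ S, s * t ∈ S)
    (hOre : ∀ (r : R), ∀ s ∈ S, ∃ r' : R, ∃ s' ∈ S, r * s' = s * r') :
    ∃ I : TwoSidedIdeal R,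
      (∀ r : R, r ∈ I ↔ ∃ s ∈ S, r * s = 0) ∧ (∀ x ∈ I, D.d x ∈ I) := by
  refine ⟨oreAnnihilator S hS_ne hS_mul hOre, fun _ => mem_oreAnnihilator, fun x hx => ?_⟩
  obtain ⟨s, hs, hxs⟩ := mem_oreAnnihilator.mp hx
  exact mem_oreAnnihilator.mpr ⟨s, hs, D.d_mul_eq_zero (hS_ker s hs) hxs⟩
end

section
/- Let (R,d) be a dg-Noetherian differential graded ring, i.e., every ascending chain of dg-ideals stabilizes. Then dgnil(R,d), the sum of all nilpotent two-sided dg-ideals, is itself a nilpotent dg-ideal. -/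
variable {R : Type*} [Ring R] (𝒜 : ℤ → AddSubgroup R) [GradedRing 𝒜]

/-- A two-sided dg-ideal: a two-sided ideal that is graded (closed under taking
homogeneous components) and closed under the differential. -/
def IsDGIdeal (D : DGDifferential 𝒜) (I : TwoSidedIdeal R) : Prop :=
  (∀ x ∈ I, ∀ i : ℤ, (DirectSum.decompose 𝒜 x i : R) ∈ I) ∧ (∀ x ∈ I, D.d x ∈ I)

/-- A two-sided ideal `I` is nilpotent if `I ^ n = 0` for some `n ≥ 1`, i.e. every
product of `n` elements of `I` vanishes. -/
def IsNilpotentIdeal (I : TwoSidedIdeal R) : Prop :=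
  ∃ n : ℕ, 0 < n ∧ ∀ l : List R, l.length = n → (∀ x ∈ l, x ∈ I) → l.prod = 0

/-!
Nilpotent dg-ideals are closed under finite sums: if `J ^ n = 0`, every product of `n` elements
of `I + J` lies in `I` (replace each factor by its `J`-part modulo `I`), so
`(I + J) ^ (n * m) ⊆ I ^ m = 0` when `I ^ m = 0`. By the chain condition there is a maximal
nilpotent dg-ideal, and closure under sums makes it the greatest one, hence equal to `dgnil(R, d)`.
-/

theorem Maximal.isGreatest_of_supClosed {α : Type*} [SemilatticeSup α] {S : Set α} {x : α}
    (hx : Maximal (· ∈ S) x) (hS : SupClosed S) : IsGreatest S x :=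
  ⟨hx.prop, fun _ hy => le_sup_left.trans (hx.le_of_ge (hS hy hx.prop) le_sup_right)⟩

theorem exists_maximal_of_forall_chain_stabilizes {α : Type*} [PartialOrder α] {P : α → Prop}
    (hP : ∀ f : ℕ →o α, (∀ n, P (f n)) → ∃ N, ∀ n, N ≤ n → f n = f N)
    {S : Set α} (hSP : ∀ x ∈ S, P x) (hS : S.Nonempty) : ∃ x, Maximal (· ∈ S) x := by
  have : WellFoundedGT {x // P x} := wellFoundedGT_iff_monotone_chain_condition.2 fun a => by
    obtain ⟨N, hN⟩ := hP ((OrderHom.Subtype.val P).comp a) fun n => (a n).2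
    exact ⟨N, fun n hn => Subtype.ext (hN n hn).symm⟩
  obtain ⟨x, hxS⟩ := hS
  obtain ⟨y, hy⟩ := exists_maximal_of_wellFoundedGT (fun y : {x // P x} => y.1 ∈ S)
    ⟨⟨x, hSP x hxS⟩, hxS⟩
  exact ⟨y, hy.prop, fun z hz hyz => hy.le_of_ge (y := ⟨z, hSP z hz⟩) hz hyz⟩

theorem List.exists_prod_eq_of_forall_chunk {M : Type*} [Monoid M] {K T : Set M} {n : ℕ}
    (h : ∀ l : List M, l.length = n → (∀ x ∈ l, x ∈ K) → l.prod ∈ T) :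
    ∀ (m : ℕ) (l : List M), l.length = n * m → (∀ x ∈ l, x ∈ K) →
      ∃ g : List M, g.length = m ∧ (∀ y ∈ g, y ∈ T) ∧ g.prod = l.prod
  | 0, l, hl, _ => ⟨[], rfl, by simp, by simp [List.eq_nil_of_length_eq_zero hl]⟩
  | m + 1, l, hl, hK => by
    obtain ⟨g, hg, hgT, hprod⟩ := exists_prod_eq_of_forall_chunk h m (l.drop n)
      (by simp [hl, Nat.mul_succ]) fun x hx => hK x (List.mem_of_mem_drop hx)
    refine ⟨(l.take n).prod :: g, by simp [hg], ?_, ?_⟩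
    · simpa using ⟨h _ (by simp [hl, Nat.mul_succ]) fun x hx => hK x (List.mem_of_mem_take hx),
        hgT⟩
    · rw [List.prod_cons, hprod, ← List.prod_append, List.take_append_drop]

namespace TwoSidedIdeal

theorem exists_list_prod_sub_mem_of_mem_sup (I J : TwoSidedIdeal R) :
    ∀ l : List R, (∀ x ∈ l, x ∈ I ⊔ J) →
      ∃ l' : List R, l'.length = l.length ∧ (∀ y ∈ l', y ∈ J) ∧ l.prod - l'.prod ∈ I
  | [], _ => ⟨[], rfl, by simp, by simp [I.zero_mem]⟩
  | x :: l, hl => by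
    obtain ⟨a, ha, b, hb, rfl⟩ := mem_sup.1 (hl x List.mem_cons_self)
    obtain ⟨l', hlen, hJ, hI⟩ :=
      exists_list_prod_sub_mem_of_mem_sup I J l fun y hy => hl y (List.mem_cons_of_mem _ hy)
    refine ⟨b :: l', by simp [hlen], by simpa using ⟨hb, hJ⟩, ?_⟩
    have key : (a + b) * l.prod - b * l'.prod = a * l.prod + b * (l.prod - l'.prod) := by
      noncomm_ring
    simpa [key] using I.add_mem (I.mul_mem_right _ _ ha) (I.mul_mem_left _ _ hI)

theorem list_prod_mem_of_mem_sup {I J : TwoSidedIdeal R} {n : ℕ}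
    (hJ : ∀ l : List R, l.length = n → (∀ x ∈ l, x ∈ J) → l.prod = 0)
    (l : List R) (hl : l.length = n) (hIJ : ∀ x ∈ l, x ∈ I ⊔ J) : l.prod ∈ I := by
  obtain ⟨l', hlen, hl'J, hsub⟩ := I.exists_list_prod_sub_mem_of_mem_sup J l hIJ
  simpa [hJ l' (hlen.trans hl) hl'J] using hsub

theorem map_mem_sup {I J : TwoSidedIdeal R} {f : R →+ R}
    (hI : ∀ x ∈ I, f x ∈ I) (hJ : ∀ x ∈ J, f x ∈ J) : ∀ x ∈ I ⊔ J, f x ∈ I ⊔ J := by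
  intro x hx
  obtain ⟨a, ha, b, hb, rfl⟩ := mem_sup.1 hx
  rw [map_add]
  exact (I ⊔ J).add_mem (mem_sup_left (hI a ha)) (mem_sup_right (hJ b hb))

end TwoSidedIdeal

theorem isNilpotentIdeal_bot : IsNilpotentIdeal (⊥ : TwoSidedIdeal R) :=
  ⟨1, one_pos, fun l hl hmem => by
    obtain ⟨a, rfl⟩ := List.length_eq_one_iff.1 hl
    simpa using hmem a List.mem_cons_self⟩

theorem IsNilpotentIdeal.sup {I J : TwoSidedIdeal R}
    (hI : IsNilpotentIdeal I) (hJ : IsNilpotentIdeal J) : IsNilpotentIdeal (I ⊔ J) := by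
  obtain ⟨m, hm, hIm⟩ := hI
  obtain ⟨n, hn, hJn⟩ := hJ
  refine ⟨n * m, Nat.mul_pos hn hm, fun l hl hIJ => ?_⟩
  obtain ⟨g, hg, hgI, hprod⟩ := List.exists_prod_eq_of_forall_chunk (K := ↑(I ⊔ J)) (T := ↑I)
    (I.list_prod_mem_of_mem_sup hJn) m l hl hIJ
  rw [← hprod, hIm g hg hgI]

variable {𝒜}

theorem isDGIdeal_bot (D : DGDifferential 𝒜) : IsDGIdeal 𝒜 D ⊥ :=
  ⟨by simp, by simp⟩

theorem IsDGIdeal.sup {D : DGDifferential 𝒜} {I J : TwoSidedIdeal R} (hI : IsDGIdeal 𝒜 D I)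
    (hJ : IsDGIdeal 𝒜 D J) : IsDGIdeal 𝒜 D (I ⊔ J) :=
  ⟨fun x hx i => TwoSidedIdeal.map_mem_sup (f := GradedRing.proj 𝒜 i) (fun y hy => hI.1 y hy i)
    (fun y hy => hJ.1 y hy i) x hx, TwoSidedIdeal.map_mem_sup hI.2 hJ.2⟩

/-- if `(R, d)` is dg-Noetherian (every ascending chain of two-sided
dg-ideals stabilizes), then `dgnil(R, d)`, the sum of all nilpotent two-sided
dg-ideals, is itself a nilpotent two-sided dg-ideal. -/
theorem dgnil_nilpotent_of_dgNoetherian (D : DGDifferential 𝒜)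
    (hNoeth : ∀ f : ℕ →o TwoSidedIdeal R, (∀ n, IsDGIdeal 𝒜 D (f n)) →
      ∃ N : ℕ, ∀ n, N ≤ n → f n = f N) :
    IsDGIdeal 𝒜 D (sSup {I : TwoSidedIdeal R | IsDGIdeal 𝒜 D I ∧ IsNilpotentIdeal I}) ∧
      IsNilpotentIdeal (sSup {I : TwoSidedIdeal R | IsDGIdeal 𝒜 D I ∧ IsNilpotentIdeal I}) := by
  set S := {I : TwoSidedIdeal R | IsDGIdeal 𝒜 D I ∧ IsNilpotentIdeal I}
  have hSup : SupClosed S := fun _ hI _ hJ => ⟨hI.1.sup hJ.1, hI.2.sup hJ.2⟩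
  obtain ⟨J, hJ⟩ := exists_maximal_of_forall_chain_stabilizes (S := S) hNoeth (fun _ hI => hI.1)
    ⟨⊥, isDGIdeal_bot D, isNilpotentIdeal_bot⟩
  exact (hJ.isGreatest_of_supClosed hSup).csSup_mem
end

section
/- Let (R,d) be a differential graded ring. Then the right singular dg-ideal ζ_dg(R,d), consisting of all a ∈ R for which there exists a dg-essential dg-right ideal E with aE = 0, is a left ideal of R closed under the differential d. -/
variable {R : Type*} [Ring R] (𝒜 : ℤ → AddSubgroup R) [GradedRing 𝒜]

variable {𝒜} in
/-- A dg-right ideal: an additive subgroup closed under right multiplication, graded,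
and closed under the differential. -/
def IsDGRightIdeal (D : DGDifferential 𝒜) (E : AddSubgroup R) : Prop :=
  (∀ x ∈ E, ∀ r : R, x * r ∈ E) ∧
  (∀ x ∈ E, ∀ i : ℤ, (DirectSum.decompose 𝒜 x i : R) ∈ E) ∧
  (∀ x ∈ E, D.d x ∈ E)

variable {𝒜} in
/-- A dg-right ideal is dg-essential if it meets every nonzero dg-right ideal
nontrivially. -/
def IsDGEssentialRightIdeal (D : DGDifferential 𝒜) (E : AddSubgroup R) : Prop :=
  IsDGRightIdeal D E ∧ ∀ X : AddSubgroup R, IsDGRightIdeal D X → X ≠ ⊥ → E ⊓ X ≠ ⊥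


section Aux

variable {R : Type*} [Ring R] {𝒜 : ℤ → AddSubgroup R} [GradedRing 𝒜]

lemma aux_inf_isDGRightIdeal (D : DGDifferential 𝒜) {E F : AddSubgroup R}
    (hE : IsDGRightIdeal D E) (hF : IsDGRightIdeal D F) : IsDGRightIdeal D (E ⊓ F) :=
  ⟨fun x hx r => ⟨hE.1 x hx.1 r, hF.1 x hx.2 r⟩,
   fun x hx i => ⟨hE.2.1 x hx.1 i, hF.2.1 x hx.2 i⟩,
   fun x hx => ⟨hE.2.2 x hx.1, hF.2.2 x hx.2⟩⟩

lemma aux_top_isDGEssential (D : DGDifferential 𝒜) :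
    IsDGEssentialRightIdeal D (⊤ : AddSubgroup R) := by
  refine ⟨⟨fun x _ r => trivial, fun x _ i => trivial, fun x _ => trivial⟩, ?_⟩
  intro X hX hXne
  simpa using hXne

lemma aux_inf_isDGEssential (D : DGDifferential 𝒜) {E F : AddSubgroup R}
    (hE : IsDGEssentialRightIdeal D E) (hF : IsDGEssentialRightIdeal D F) :
    IsDGEssentialRightIdeal D (E ⊓ F) := by
  refine ⟨aux_inf_isDGRightIdeal D hE.1 hF.1, ?_⟩
  intro X hX hXne
  have h1 : F ⊓ X ≠ ⊥ := hF.2 X hX hXne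
  have h2 : E ⊓ (F ⊓ X) ≠ ⊥ := hE.2 (F ⊓ X) (aux_inf_isDGRightIdeal D hF.1 hX) h1
  have : E ⊓ (F ⊓ X) ≤ (E ⊓ F) ⊓ X := by
    intro x hx
    exact ⟨⟨hx.1, hx.2.1⟩, hx.2.2⟩
  intro hbot
  exact h2 (le_bot_iff.mp (hbot ▸ this))

/-- homogeneous components of an annihilator also annihilate a graded right ideal -/
lemma aux_component_ann (D : DGDifferential 𝒜) {E : AddSubgroup R}
    (hE : IsDGRightIdeal D E) {a : R} (ha : ∀ x ∈ E, a * x = 0) (i : ℤ) :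
    ∀ x ∈ E, (DirectSum.decompose 𝒜 a i : R) * x = 0 := by
  classical
  have hom : ∀ (j : ℤ) (x : R), x ∈ E → x ∈ 𝒜 j →
      (DirectSum.decompose 𝒜 a i : R) * x = 0 := by
    intro j x hxE hxj
    have := DirectSum.coe_decompose_mul_add_of_right_mem 𝒜 (i := i) (a := a) hxj
    rw [ha x hxE] at this
    simpa using this.symm
  intro x hxE
  conv_lhs => rw [← DirectSum.sum_support_decompose 𝒜 x]
  rw [Finset.mul_sum]
  refine Finset.sum_eq_zero fun j _ => ?_
  exact hom j _ (hE.2.1 x hxE j) (DirectSum.decompose 𝒜 x j).2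

/-- if a homogeneous element annihilates a dg-right ideal, so does its differential -/
lemma aux_d_hom_ann (D : DGDifferential 𝒜) {E : AddSubgroup R}
    (hE : IsDGRightIdeal D E) {b : R} {i : ℤ} (hb : b ∈ 𝒜 i)
    (hbann : ∀ x ∈ E, b * x = 0) : ∀ x ∈ E, D.d b * x = 0 := by
  classical
  have hom : ∀ x ∈ E, D.d b * x = 0 ∨ True := fun _ _ => Or.inr trivial
  have key : ∀ x ∈ E, D.d b * x = 0 := by
    intro x hxE
    have hleib := D.leibniz i b x hb
    rw [hbann x hxE, map_zero] at hleib
    have hdx : b * D.d x = 0 := hbann _ (hE.2.2 x hxE)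
    rw [hdx, smul_zero, add_zero] at hleib
    exact hleib.symm
  exact key

lemma aux_d_ann (D : DGDifferential 𝒜) {E : AddSubgroup R}
    (hE : IsDGRightIdeal D E) {a : R} (ha : ∀ x ∈ E, a * x = 0) :
    ∀ x ∈ E, D.d a * x = 0 := by
  classical
  intro x hxE
  conv_lhs => rw [← DirectSum.sum_support_decompose 𝒜 a]
  rw [map_sum, Finset.sum_mul]
  refine Finset.sum_eq_zero fun i _ => ?_
  exact aux_d_hom_ann D hE (DirectSum.decompose 𝒜 a i).2
    (aux_component_ann D hE ha i) x hxE

end Aux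

/-- the right singular dg-ideal
`ζ_dg(R,d) = {a | ∃ dg-essential dg-right ideal E, a * E = 0}` is a left ideal of `R`
closed under the differential `d`. -/
theorem singular_dgIdeal_is_left_ideal (D : DGDifferential 𝒜) :
    (0 : R) ∈ {a : R | ∃ E : AddSubgroup R, IsDGEssentialRightIdeal D E ∧ ∀ x ∈ E, a * x = 0} ∧
    (∀ a b : R,
      a ∈ {a : R | ∃ E : AddSubgroup R, IsDGEssentialRightIdeal D E ∧ ∀ x ∈ E, a * x = 0} →
      b ∈ {a : R | ∃ E : AddSubgroup R, IsDGEssentialRightIdeal D E ∧ ∀ x ∈ E, a * x = 0} →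
      a + b ∈ {a : R | ∃ E : AddSubgroup R, IsDGEssentialRightIdeal D E ∧ ∀ x ∈ E, a * x = 0}) ∧
    (∀ a : R,
      a ∈ {a : R | ∃ E : AddSubgroup R, IsDGEssentialRightIdeal D E ∧ ∀ x ∈ E, a * x = 0} →
      -a ∈ {a : R | ∃ E : AddSubgroup R, IsDGEssentialRightIdeal D E ∧ ∀ x ∈ E, a * x = 0}) ∧
    (∀ r a : R,
      a ∈ {a : R | ∃ E : AddSubgroup R, IsDGEssentialRightIdeal D E ∧ ∀ x ∈ E, a * x = 0} →
      r * a ∈ {a : R | ∃ E : AddSubgroup R, IsDGEssentialRightIdeal D E ∧ ∀ x ∈ E, a * x = 0}) ∧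
    (∀ a : R,
      a ∈ {a : R | ∃ E : AddSubgroup R, IsDGEssentialRightIdeal D E ∧ ∀ x ∈ E, a * x = 0} →
      D.d a ∈ {a : R | ∃ E : AddSubgroup R, IsDGEssentialRightIdeal D E ∧ ∀ x ∈ E, a * x = 0}) := by
  refine ⟨⟨⊤, aux_top_isDGEssential D, fun x _ => zero_mul x⟩, ?_, ?_, ?_, ?_⟩
  · rintro a b ⟨E, hE, haE⟩ ⟨F, hF, hbF⟩
    exact ⟨E ⊓ F, aux_inf_isDGEssential D hE hF,
      fun x hx => by rw [add_mul, haE x hx.1, hbF x hx.2, add_zero]⟩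
  · rintro a ⟨E, hE, haE⟩
    exact ⟨E, hE, fun x hx => by rw [neg_mul, haE x hx, neg_zero]⟩
  · rintro r a ⟨E, hE, haE⟩
    exact ⟨E, hE, fun x hx => by rw [mul_assoc, haE x hx, mul_zero]⟩
  · rintro a ⟨E, hE, haE⟩
    exact ⟨E, hE, aux_d_ann D hE.1 haE⟩
end

section
/- Let (R,d) be a dg-semiprime differential graded ring and (I,d) a two-sided dg-ideal. Then the left annihilator lann(I) equals the right annihilator rann(I), and this common annihilator ann(I) is a two-sided dg-ideal satisfying I ∩ ann(I) = 0; moreover ann(I) is the unique two-sided dg-ideal maximal with respect to having zero intersection with I. -/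
variable {R : Type*} [Ring R] (𝒜 : ℤ → AddSubgroup R) [GradedRing 𝒜]

lemma neg_one_pow_smul_eq_zero {M : Type*} [AddCommGroup M] {n : ℕ} {a : M}
    (h : ((-1 : ℤ) ^ n) • a = 0) : a = 0 := by
  have h2 := congrArg (fun v => ((-1 : ℤ) ^ n) • v) h
  simpa [smul_smul, ← mul_pow] using h2

/-- in a dg-semiprime dg-ring, for any two-sided dg-ideal `I` the left
and right annihilators coincide, and the common annihilator `ann I` is a two-sided
dg-ideal with `I ⊓ ann I = 0` which is the unique two-sided dg-ideal maximal with
respect to having zero intersection with `I` (every dg-ideal meeting `I` trivially is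
contained in it). -/
theorem annihilator_of_dgIdeal_in_dgSemiprime (D : DGDifferential 𝒜)
    (hsemi : ∀ I : TwoSidedIdeal R, IsDGIdeal 𝒜 D I → IsNilpotentIdeal I → I = ⊥)
    (I : TwoSidedIdeal R) (hI : IsDGIdeal 𝒜 D I) :
    (∀ r : R, (∀ x ∈ I, r * x = 0) ↔ (∀ x ∈ I, x * r = 0)) ∧
    ∃ A : TwoSidedIdeal R,
      (∀ r : R, r ∈ A ↔ ∀ x ∈ I, x * r = 0) ∧
      IsDGIdeal 𝒜 D A ∧ I ⊓ A = ⊥ ∧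
      (∀ J : TwoSidedIdeal R, IsDGIdeal 𝒜 D J → I ⊓ J = ⊥ → J ≤ A) := by
  classical
  -- reduction to homogeneous elements of I
  have keyL : ∀ c : R, (∀ (j : ℤ) (y : R), y ∈ 𝒜 j → y ∈ I → c * y = 0) →
      ∀ x ∈ I, c * x = 0 := by
    intro c h x hx
    conv_lhs => rw [← DirectSum.sum_support_decompose 𝒜 x]
    rw [Finset.mul_sum]
    exact Finset.sum_eq_zero fun j _ => h j _ (SetLike.coe_mem _) (hI.1 x hx j)
  have keyR : ∀ c : R, (∀ (j : ℤ) (y : R), y ∈ 𝒜 j → y ∈ I → y * c = 0) →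
      ∀ x ∈ I, x * c = 0 := by
    intro c h x hx
    conv_lhs => rw [← DirectSum.sum_support_decompose 𝒜 x]
    rw [Finset.sum_mul]
    exact Finset.sum_eq_zero fun j _ => h j _ (SetLike.coe_mem _) (hI.1 x hx j)
  -- left annihilator
  set Lc : Set R := {r | ∀ x ∈ I, r * x = 0} with hLc
  have Lzero : (0 : R) ∈ Lc := fun x _ => zero_mul x
  have Ladd : ∀ {a b : R}, a ∈ Lc → b ∈ Lc → a + b ∈ Lc := fun ha hb x hx => by
    rw [add_mul, ha x hx, hb x hx, add_zero]
  have Lneg : ∀ {a : R}, a ∈ Lc → -a ∈ Lc := fun ha x hx => by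
    rw [neg_mul, ha x hx, neg_zero]
  have LmL : ∀ {a b : R}, b ∈ Lc → a * b ∈ Lc := fun {a b} hb x hx => by
    rw [mul_assoc, hb x hx, mul_zero]
  have LmR : ∀ {a b : R}, a ∈ Lc → a * b ∈ Lc := fun {a b} ha x hx => by
    rw [mul_assoc]; exact ha _ (I.mul_mem_left b x hx)
  set Lann : TwoSidedIdeal R := TwoSidedIdeal.mk' Lc Lzero Ladd Lneg LmL LmR with hLann
  have memL : ∀ r : R, r ∈ Lann ↔ r ∈ Lc := TwoSidedIdeal.mem_mk' _ _ _ _ _ _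
  -- right annihilator
  set Rc : Set R := {r | ∀ x ∈ I, x * r = 0} with hRc
  have Rzero : (0 : R) ∈ Rc := fun x _ => mul_zero x
  have Radd : ∀ {a b : R}, a ∈ Rc → b ∈ Rc → a + b ∈ Rc := fun ha hb x hx => by
    rw [mul_add, ha x hx, hb x hx, add_zero]
  have Rneg : ∀ {a : R}, a ∈ Rc → -a ∈ Rc := fun ha x hx => by
    rw [mul_neg, ha x hx, neg_zero]
  have RmL : ∀ {a b : R}, b ∈ Rc → a * b ∈ Rc := fun {a b} hb x hx => by
    rw [← mul_assoc]; exact hb _ (I.mul_mem_right x a hx)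
  have RmR : ∀ {a b : R}, a ∈ Rc → a * b ∈ Rc := fun {a b} ha x hx => by
    rw [← mul_assoc, ha x hx, zero_mul]
  set Rann : TwoSidedIdeal R := TwoSidedIdeal.mk' Rc Rzero Radd Rneg RmL RmR with hRann
  have memR : ∀ r : R, r ∈ Rann ↔ r ∈ Rc := TwoSidedIdeal.mem_mk' _ _ _ _ _ _
  -- Lann is graded
  have Lgr : ∀ r ∈ Lc, ∀ i : ℤ, (DirectSum.decompose 𝒜 r i : R) ∈ Lc := by
    intro r hr i
    apply keyL
    intro j y hyj hyI
    have h0 : r * y = 0 := hr y hyI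
    have h1 : (DirectSum.decompose 𝒜 (r * y) (i + j) : R)
        = (DirectSum.decompose 𝒜 r i : R) * y := by
      have hy : r * y = r * ((⟨y, hyj⟩ : 𝒜 j) : R) := rfl
      rw [hy, DirectSum.decompose_mul, DirectSum.decompose_coe]
      exact DirectSum.coe_mul_of_apply_add (A := 𝒜) _ _ _
    rw [h0] at h1
    simpa using h1.symm
  -- Rann is graded
  have Rgr : ∀ r ∈ Rc, ∀ i : ℤ, (DirectSum.decompose 𝒜 r i : R) ∈ Rc := by
    intro r hr i
    apply keyR
    intro j y hyj hyI
    have h0 : y * r = 0 := hr y hyI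
    have h1 : (DirectSum.decompose 𝒜 (y * r) (j + i) : R)
        = y * (DirectSum.decompose 𝒜 r i : R) := by
      have hy : y * r = ((⟨y, hyj⟩ : 𝒜 j) : R) * r := rfl
      rw [hy, DirectSum.decompose_mul, DirectSum.decompose_coe]
      exact DirectSum.coe_of_mul_apply_add (A := 𝒜) _ _ _
    rw [h0] at h1
    simpa using h1.symm
  -- Lann is d-closed
  have Ld : ∀ r ∈ Lc, D.d r ∈ Lc := by
    intro r hr x hx
    conv_lhs => rw [← DirectSum.sum_support_decompose 𝒜 r]
    rw [map_sum, Finset.sum_mul]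
    refine Finset.sum_eq_zero fun j _ => ?_
    have hmem : (DirectSum.decompose 𝒜 r j : R) ∈ 𝒜 j := SetLike.coe_mem _
    have hjL : (DirectSum.decompose 𝒜 r j : R) ∈ Lc := Lgr r hr j
    have hlb := D.leibniz j _ x hmem
    rw [hjL x hx, map_zero, hjL _ (hI.2 x hx), smul_zero, add_zero] at hlb
    exact hlb.symm
  -- Rann is d-closed
  have Rd : ∀ r ∈ Rc, D.d r ∈ Rc := by
    intro r hr
    apply keyR
    intro j y hyj hyI
    have hlb := D.leibniz j y r hyj
    rw [hr y hyI, map_zero] at hlb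
    have h2 : ((-1 : ℤ) ^ j.natAbs) • (y * D.d r) = 0 := by
      have h3 : D.d y * r = 0 := hr _ (hI.2 y hyI)
      rw [h3, zero_add] at hlb
      exact hlb.symm
    exact neg_one_pow_smul_eq_zero h2
  have hLdg : IsDGIdeal 𝒜 D Lann :=
    ⟨fun x hx i => (memL _).2 (Lgr x ((memL _).1 hx) i),
     fun x hx => (memL _).2 (Ld x ((memL _).1 hx))⟩
  have hRdg : IsDGIdeal 𝒜 D Rann :=
    ⟨fun x hx i => (memR _).2 (Rgr x ((memR _).1 hx) i),
     fun x hx => (memR _).2 (Rd x ((memR _).1 hx))⟩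
  -- I ⊓ Rann = ⊥ and I ⊓ Lann = ⊥
  have sqzero : ∀ K : TwoSidedIdeal R, (∀ a ∈ K, ∀ b ∈ K, a * b = 0) →
      IsNilpotentIdeal K := by
    intro K hK
    refine ⟨2, by norm_num, fun l hl hmem => ?_⟩
    obtain ⟨a, b, rfl⟩ := List.length_eq_two.1 hl
    simp only [List.prod_cons, List.prod_nil, mul_one]
    exact hK a (hmem a (by simp)) b (hmem b (by simp))
  have hIR : I ⊓ Rann = ⊥ := by
    refine hsemi _ ⟨fun x hx i => ?_, fun x hx => ?_⟩ (sqzero _ fun a ha b hb => ?_)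
    · rw [TwoSidedIdeal.mem_inf] at hx ⊢
      exact ⟨hI.1 x hx.1 i, hRdg.1 x hx.2 i⟩
    · rw [TwoSidedIdeal.mem_inf] at hx ⊢
      exact ⟨hI.2 x hx.1, hRdg.2 x hx.2⟩
    · rw [TwoSidedIdeal.mem_inf] at ha hb
      exact (memR b).1 hb.2 a ha.1
  have hIL : I ⊓ Lann = ⊥ := by
    refine hsemi _ ⟨fun x hx i => ?_, fun x hx => ?_⟩ (sqzero _ fun a ha b hb => ?_)
    · rw [TwoSidedIdeal.mem_inf] at hx ⊢
      exact ⟨hI.1 x hx.1 i, hLdg.1 x hx.2 i⟩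
    · rw [TwoSidedIdeal.mem_inf] at hx ⊢
      exact ⟨hI.2 x hx.1, hLdg.2 x hx.2⟩
    · rw [TwoSidedIdeal.mem_inf] at ha hb
      exact (memL a).1 ha.2 b hb.1
  -- Lann = Rann (elementwise)
  have LsubR : ∀ r ∈ Lc, r ∈ Rc := by
    intro r hr x hx
    have h1 : x * r ∈ I ⊓ Lann :=
      (TwoSidedIdeal.mem_inf _).2 ⟨I.mul_mem_right x r hx, (memL _).2 (LmL hr)⟩
    rw [hIL] at h1
    exact (TwoSidedIdeal.mem_bot _).1 h1
  have RsubL : ∀ r ∈ Rc, r ∈ Lc := by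
    intro r hr x hx
    have h1 : r * x ∈ I ⊓ Rann :=
      (TwoSidedIdeal.mem_inf _).2 ⟨I.mul_mem_left r x hx, (memR _).2 (RmR hr)⟩
    rw [hIR] at h1
    exact (TwoSidedIdeal.mem_bot _).1 h1
  refine ⟨fun r => ⟨fun h => LsubR r h, fun h => RsubL r h⟩,
    Rann, memR, hRdg, hIR, fun J _ hJ r hrJ => ?_⟩
  refine (memR r).2 fun x hx => ?_
  have h1 : x * r ∈ I ⊓ J :=
    (TwoSidedIdeal.mem_inf _).2 ⟨I.mul_mem_right x r hx, J.mul_mem_left x r hrJ⟩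
  rw [hJ] at h1
  exact (TwoSidedIdeal.mem_bot _).1 h1
end

section
/- Let (A,d) be a differential graded algebra such that ker(d), with its induced grading, is a graded-prime ring (for any two nonzero graded two-sided ideals I, J of ker(d) one has IJ ≠ 0). Then (A,d) is dg-prime: for any two nonzero two-sided dg-ideals I, J of (A,d), IJ ≠ 0. -/
variable {R : Type*} [Ring R] (𝒜 : ℤ → AddSubgroup R) [GradedRing 𝒜]

variable {𝒜} in
/-- A graded two-sided ideal of the subring of cycles `ker d`: a subset of `ker d`
which is an additive subgroup, closed under left and right multiplication by cycles,
and closed under taking homogeneous components. -/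
def IsGradedIdealOfCycles (D : DGDifferential 𝒜) (I : Set R) : Prop :=
  (∀ x ∈ I, D.d x = 0) ∧ (0 : R) ∈ I ∧
  (∀ a ∈ I, ∀ b ∈ I, a + b ∈ I) ∧ (∀ a ∈ I, -a ∈ I) ∧
  (∀ s : R, D.d s = 0 → ∀ a ∈ I, s * a ∈ I ∧ a * s ∈ I) ∧
  (∀ a ∈ I, ∀ i : ℤ, (DirectSum.decompose 𝒜 a i : R) ∈ I)

/-!
The cycles `I ∩ ker d` of a dg-ideal `I` form a graded ideal of the ring of cycles: the Leibniz
rule shows `ker d` is closed under products, and `d` commutes with the homogeneous projections up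
to the degree shift. This ideal is nonzero as soon as `I` is, since for `x ∈ I` with `d x ≠ 0` the
element `d x` is a nonzero cycle of `I`. Graded primeness of `ker d` then yields nonzero products.
-/

namespace DGDifferential

variable {𝒜} (D : DGDifferential 𝒜)

theorem d_mul_of_d_eq_zero_right (a : R) {b : R} (hb : D.d b = 0) :
    D.d (a * b) = D.d a * b := by
  classical
  induction a using DirectSum.Decomposition.inductionOn 𝒜 with
  | zero => simp
  | homogeneous x => rw [D.leibniz _ _ b x.2, hb, mul_zero, smul_zero, add_zero]
  | add x y hx hy => rw [add_mul, map_add, map_add, hx, hy, add_mul]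

theorem d_mul_eq_zero_s18 {a b : R} (ha : D.d a = 0) (hb : D.d b = 0) : D.d (a * b) = 0 := by
  rw [D.d_mul_of_d_eq_zero_right a hb, ha, zero_mul]

theorem d_decompose (x : R) (i : ℤ) :
    D.d (DirectSum.decompose 𝒜 x i : R) = (DirectSum.decompose 𝒜 (D.d x) (i + 1) : R) := by
  classical
  induction x using DirectSum.Decomposition.inductionOn 𝒜 with
  | zero => simp
  | @homogeneous j x =>
    by_cases h : j = i
    · subst h
      rw [DirectSum.decompose_of_mem_same 𝒜 x.2,
        DirectSum.decompose_of_mem_same 𝒜 (D.d_mem j x x.2)]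
    · rw [DirectSum.decompose_of_mem_ne 𝒜 x.2 h, map_zero,
        DirectSum.decompose_of_mem_ne 𝒜 (D.d_mem j x x.2) (by omega)]
  | add x y hx hy =>
    simp only [DirectSum.decompose_add, DirectSum.add_apply, AddSubgroup.coe_add, map_add, hx, hy]

def cyclesOf (I : TwoSidedIdeal R) : Set R := {x | x ∈ I ∧ D.d x = 0}

theorem isGradedIdealOfCycles_cyclesOf {I : TwoSidedIdeal R} (hI : IsDGIdeal 𝒜 D I) :
    IsGradedIdealOfCycles D (D.cyclesOf I) :=
  ⟨fun _ hx => hx.2,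
    ⟨I.zero_mem, map_zero _⟩,
    fun _ ha _ hb => ⟨I.add_mem ha.1 hb.1, by rw [map_add, ha.2, hb.2, add_zero]⟩,
    fun _ ha => ⟨I.neg_mem ha.1, by rw [map_neg, ha.2, neg_zero]⟩,
    fun s hs _ ha => ⟨⟨I.mul_mem_left _ _ ha.1, D.d_mul_eq_zero_s18 hs ha.2⟩,
      ⟨I.mul_mem_right _ _ ha.1, D.d_mul_eq_zero_s18 ha.2 hs⟩⟩,
    fun a ha i => ⟨hI.1 a ha.1 i, by rw [D.d_decompose, ha.2, DirectSum.decompose_zero]; rfl⟩⟩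

theorem cyclesOf_ne_singleton_zero {I : TwoSidedIdeal R} (hd : ∀ x ∈ I, D.d x ∈ I)
    (hI : I ≠ ⊥) : D.cyclesOf I ≠ {0} := by
  obtain ⟨x, hxI, hx⟩ : ∃ x ∈ I, x ≠ 0 := by
    by_contra! h
    exact hI <| TwoSidedIdeal.ext fun x => by
      rw [TwoSidedIdeal.mem_bot]; exact ⟨h x, (· ▸ I.zero_mem)⟩
  intro h
  by_cases hdx : D.d x = 0
  · exact hx (h ▸ ⟨hxI, hdx⟩ : x ∈ ({0} : Set R))
  · exact hdx (h ▸ ⟨hd x hxI, D.d_sq x⟩ : D.d x ∈ ({0} : Set R))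

end DGDifferential

/-- if the ring of cycles `ker d` is graded-prime, then `(A,d)` is
dg-prime: any two nonzero two-sided dg-ideals have nonzero product. -/
theorem dgPrime_of_cycles_grPrime (D : DGDifferential 𝒜)
    (hgrprime : ∀ I J : Set R, IsGradedIdealOfCycles D I → IsGradedIdealOfCycles D J →
      I ≠ {0} → J ≠ {0} → ∃ a ∈ I, ∃ b ∈ J, a * b ≠ 0) :
    ∀ I J : TwoSidedIdeal R, IsDGIdeal 𝒜 D I → IsDGIdeal 𝒜 D J → I ≠ ⊥ → J ≠ ⊥ →
      ∃ a ∈ I, ∃ b ∈ J, a * b ≠ 0 := by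
  intro I J hI hJ hI₀ hJ₀
  obtain ⟨a, ha, b, hb, hab⟩ := hgrprime _ _
    (D.isGradedIdealOfCycles_cyclesOf hI) (D.isGradedIdealOfCycles_cyclesOf hJ)
    (D.cyclesOf_ne_singleton_zero hI.2 hI₀) (D.cyclesOf_ne_singleton_zero hJ.2 hJ₀)
  exact ⟨a, ha.1, b, hb.1, hab⟩
end

section
/- Let (A,d) be a differential graded algebra whose cycle subring S = ker(d) is graded hereditary. Then for any graded ideal I of S, the set J = A·I is a dg-ideal of (A,d) and S ∩ J = I. -/
variable {R : Type*} [Ring R] (𝒜 : ℤ → AddSubgroup R) [GradedRing 𝒜]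

variable {𝒜}

theorem DGDifferential.d_one (D : DGDifferential 𝒜) : D.d 1 = 0 := by
  have h := D.leibniz 0 1 1 (SetLike.one_mem_graded 𝒜)
  simp only [one_mul, mul_one, Int.natAbs_zero, pow_zero, one_smul] at h
  exact (left_eq_add.mp h)

theorem DGDifferential.d_decompose_eq_zero (D : DGDifferential 𝒜) {x : R}
    (hx : D.d x = 0) (i : ℤ) : D.d (DirectSum.decompose 𝒜 x i : R) = 0 := by
  classical
  by_cases hi : i ∈ (DirectSum.decompose 𝒜 x).support
  · have hsum : ∑ j ∈ (DirectSum.decompose 𝒜 x).support,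
        D.d (DirectSum.decompose 𝒜 x j : R) = 0 := by
      rw [← map_sum, DirectSum.sum_support_decompose 𝒜 x, hx]
    have h0 : (DirectSum.decompose 𝒜 (∑ j ∈ (DirectSum.decompose 𝒜 x).support,
        D.d (DirectSum.decompose 𝒜 x j : R)) (i + 1) : R) = 0 := by
      rw [hsum]; simp
    rw [DirectSum.decompose_sum, DFinsupp.finset_sum_apply,
      AddSubmonoidClass.coe_finset_sum] at h0
    have hcomp : ∀ j ∈ (DirectSum.decompose 𝒜 x).support,
        (DirectSum.decompose 𝒜 (D.d (DirectSum.decompose 𝒜 x j : R)) (i + 1) : R) =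
          if j = i then D.d (DirectSum.decompose 𝒜 x i : R) else 0 := by
      intro j _
      by_cases h : j = i
      · subst h
        rw [if_pos rfl, DirectSum.decompose_of_mem_same]
        exact D.d_mem j _ (SetLike.coe_mem _)
      · rw [if_neg h, DirectSum.decompose_of_mem_ne 𝒜 (D.d_mem j _ (SetLike.coe_mem _))]
        omega
    rw [Finset.sum_congr rfl hcomp, Finset.sum_ite_eq'] at h0
    rwa [if_pos hi] at h0
  · rw [DFinsupp.notMem_support_iff.mp hi]
    simp

/-- The subring of cycles `ker d` of a differential graded ring. -/
def cycles (D : DGDifferential 𝒜) : Subring R where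
  carrier := {x : R | D.d x = 0}
  zero_mem' := map_zero D.d
  one_mem' := D.d_one
  add_mem' := by
    intro a b ha hb
    simp only [Set.mem_setOf_eq] at *
    rw [map_add, ha, hb, add_zero]
  neg_mem' := by
    intro a ha
    simp only [Set.mem_setOf_eq] at *
    rw [map_neg, ha, neg_zero]
  mul_mem' := by
    intro a b ha hb
    simp only [Set.mem_setOf_eq] at *
    classical
    have h : a * b = ∑ j ∈ (DirectSum.decompose 𝒜 a).support,
        (DirectSum.decompose 𝒜 a j : R) * b := by
      rw [← Finset.sum_mul, DirectSum.sum_support_decompose 𝒜 a]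
    rw [h, map_sum]
    refine Finset.sum_eq_zero fun j _ => ?_
    rw [D.leibniz j _ b (SetLike.coe_mem _), D.d_decompose_eq_zero ha j, hb, zero_mul,
      mul_zero, smul_zero, add_zero]

theorem DGDifferential.d_mul_cycle (D : DGDifferential 𝒜) {t : R} (ht : D.d t = 0) (a : R) :
    D.d (a * t) = D.d a * t := by
  classical
  have h1 : a * t = ∑ j ∈ (DirectSum.decompose 𝒜 a).support,
      (DirectSum.decompose 𝒜 a j : R) * t := by
    rw [← Finset.sum_mul, DirectSum.sum_support_decompose 𝒜 a]
  have h2 : D.d a * t = ∑ j ∈ (DirectSum.decompose 𝒜 a).support,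
      D.d (DirectSum.decompose 𝒜 a j : R) * t := by
    rw [← Finset.sum_mul, ← map_sum, DirectSum.sum_support_decompose 𝒜 a]
  rw [h1, map_sum, h2]
  refine Finset.sum_congr rfl fun j _ => ?_
  rw [D.leibniz j _ t (SetLike.coe_mem _), ht, mul_zero, smul_zero, add_zero]

theorem DGDifferential.d_coe_cycle (D : DGDifferential 𝒜) (t : cycles D) :
    D.d (t : R) = 0 := t.2

set_option maxHeartbeats 1000000 in
set_option synthInstance.maxHeartbeats 400000 in
/-- if the cycle subring `S = ker d` is graded hereditary (every graded
ideal of `S` is projective as `S`-module), then for every graded ideal `I` of `S` the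
set `J = A · I` is a dg-ideal (a graded left ideal closed under `d`) and `S ∩ J = I`. -/
theorem span_graded_ideal_of_cycles_hereditary (D : DGDifferential 𝒜)
    (hhered : ∀ I : Ideal (cycles D),
      (∀ x ∈ I, ∀ i : ℤ, ∃ y ∈ I, ((y : R) = (DirectSum.decompose 𝒜 (x : R) i : R))) →
      Module.Projective (cycles D) ↥I)
    (I : Ideal (cycles D))
    (hgr : ∀ x ∈ I, ∀ i : ℤ, ∃ y ∈ I, ((y : R) = (DirectSum.decompose 𝒜 (x : R) i : R))) :
    (∀ x ∈ Submodule.span R {x : R | ∃ y ∈ I, ((y : R) = x)}, ∀ i : ℤ,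
      (DirectSum.decompose 𝒜 x i : R) ∈ Submodule.span R {x : R | ∃ y ∈ I, ((y : R) = x)}) ∧
    (∀ x ∈ Submodule.span R {x : R | ∃ y ∈ I, ((y : R) = x)},
      D.d x ∈ Submodule.span R {x : R | ∃ y ∈ I, ((y : R) = x)}) ∧
    (∀ x : R, (D.d x = 0 ∧ x ∈ Submodule.span R {x : R | ∃ y ∈ I, ((y : R) = x)}) ↔
      ∃ y ∈ I, ((y : R) = x)) := by
    classical
  set G : Set R := {x : R | ∃ y ∈ I, ((y : R) = x)} with hGdef
  set J := Submodule.span R G with hJdef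
  -- Part 1 : J is graded
  have hgraded : ∀ x ∈ J, ∀ n : ℤ, (DirectSum.decompose 𝒜 x n : R) ∈ J := by
    intro x hx
    induction hx using Submodule.span_induction with
    | mem x hxG =>
      intro n
      obtain ⟨y, hyI, hyx⟩ := hxG
      obtain ⟨z, hzI, hz⟩ := hgr y hyI n
      rw [← hyx]
      exact Submodule.subset_span ⟨z, hzI, hz⟩
    | zero =>
      intro n
      rw [DirectSum.decompose_zero, DirectSum.zero_apply, ZeroMemClass.coe_zero]
      exact J.zero_mem
    | add a b ha hb iha ihb =>
      intro n
      rw [DirectSum.decompose_add, DirectSum.add_apply, AddSubgroup.coe_add]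
      exact J.add_mem (iha n) (ihb n)
    | smul r z hz ihz =>
      intro n
      rw [smul_eq_mul]
      have h1 : r * z = ∑ i ∈ (DirectSum.decompose 𝒜 r).support,
          (DirectSum.decompose 𝒜 r i : R) * z := by
        rw [← Finset.sum_mul, DirectSum.sum_support_decompose 𝒜 r]
      rw [h1, DirectSum.decompose_sum, DFinsupp.finset_sum_apply,
        AddSubmonoidClass.coe_finset_sum]
      refine Submodule.sum_mem _ fun i _ => ?_
      have hn : n = i + (n - i) := by ring
      rw [hn, DirectSum.coe_decompose_mul_add_of_left_mem 𝒜 (SetLike.coe_mem _)]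
      exact J.smul_mem _ (ihz (n - i))
  -- Part 2 : J is closed under d
  have hd : ∀ x ∈ J, D.d x ∈ J := by
    intro x hx
    induction hx using Submodule.span_induction with
    | mem x hxG =>
      obtain ⟨y, hyI, hyx⟩ := hxG
      rw [← hyx, D.d_coe_cycle]
      exact J.zero_mem
    | zero => rw [map_zero]; exact J.zero_mem
    | add a b ha hb iha ihb => rw [map_add]; exact J.add_mem iha ihb
    | smul r z hz ihz =>
      rw [smul_eq_mul]
      have h1 : r * z = ∑ i ∈ (DirectSum.decompose 𝒜 r).support,
          (DirectSum.decompose 𝒜 r i : R) * z := by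
        rw [← Finset.sum_mul, DirectSum.sum_support_decompose 𝒜 r]
      rw [h1, map_sum]
      refine Submodule.sum_mem _ fun i _ => ?_
      rw [D.leibniz i _ z (SetLike.coe_mem _)]
      refine J.add_mem (J.smul_mem _ hz) ?_
      rw [zsmul_eq_mul]
      exact J.smul_mem _ (J.smul_mem _ ihz)
  refine ⟨hgraded, hd, fun x => ⟨?_, ?_⟩⟩
  · -- the hard direction : S ∩ A·I ⊆ I
    rintro ⟨hdx, hxJ⟩
    have hGrange : G = Set.range (fun m : I => ((m : cycles D) : R)) := by
      ext r
      constructor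
      · rintro ⟨y, hyI, rfl⟩; exact ⟨⟨y, hyI⟩, rfl⟩
      · rintro ⟨m, rfl⟩; exact ⟨m, m.2, rfl⟩
    rw [hJdef, hGrange, Finsupp.mem_span_range_iff_exists_finsupp] at hxJ
    obtain ⟨c, hc⟩ := hxJ
    rw [Finsupp.sum] at hc
    obtain ⟨s, hs⟩ := (hhered I hgr).out
    -- the coefficients of x in the "dual basis"
    set α : I → R := fun m => ∑ j ∈ c.support, c j * ((s j m : cycles D) : R) with hα
    -- the element ∑ d(c j) • j of I is zero since its image in R is d x = 0
    have hz0 : (∑ j ∈ c.support, (⟨D.d (c j), D.d_sq (c j)⟩ : cycles D) • j) = (0 : I) := by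
      have hcoe : (((∑ j ∈ c.support,
          (⟨D.d (c j), D.d_sq (c j)⟩ : cycles D) • j : I) : cycles D) : R) = D.d x := by
        rw [← hc, map_sum, AddSubmonoidClass.coe_finset_sum, AddSubmonoidClass.coe_finset_sum]
        refine Finset.sum_congr rfl fun j _ => ?_
        rw [smul_eq_mul, D.d_mul_cycle (D.d_coe_cycle _)]
        rfl
      rw [hdx] at hcoe
      have h1 : ((∑ j ∈ c.support,
          (⟨D.d (c j), D.d_sq (c j)⟩ : cycles D) • j : I) : cycles D) = 0 :=
        Subtype.ext hcoe
      exact Subtype.ext h1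
    -- every α m is a cycle
    have hαc : ∀ m : I, D.d (α m) = 0 := by
      intro m
      have h1 : D.d (α m) = ∑ j ∈ c.support, D.d (c j) * ((s j m : cycles D) : R) := by
        rw [hα, map_sum]
        exact Finset.sum_congr rfl fun j _ => D.d_mul_cycle (D.d_coe_cycle _) _
      have h2 : ∑ j ∈ c.support, D.d (c j) * ((s j m : cycles D) : R)
          = ((s (∑ j ∈ c.support,
              (⟨D.d (c j), D.d_sq (c j)⟩ : cycles D) • j) m : cycles D) : R) := by
        rw [map_sum, Finset.sum_apply', AddSubmonoidClass.coe_finset_sum]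
        refine Finset.sum_congr rfl fun j _ => ?_
        rw [map_smul, Finsupp.smul_apply, smul_eq_mul]
        rfl
      rw [h1, h2, hz0, map_zero]
      rfl
    -- the index set
    set U : Finset I := c.support.biUnion (fun j => (s j).support) with hU
    -- x = ∑_{m ∈ U} α m * m
    have hinner : ∀ j ∈ c.support,
        ∑ m ∈ U, ((s j m : cycles D) : R) * ((m : cycles D) : R) = ((j : cycles D) : R) := by
      intro j hj
      have h1 : ∑ m ∈ U, (s j) m • m = (j : I) := by
        have h2 : ∑ m ∈ (s j).support, (s j) m • m = (j : I) := by
          have := hs j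
          rwa [Finsupp.linearCombination_apply, Finsupp.sum] at this
        have hsub : (s j).support ⊆ U := by
          rw [hU]; exact Finset.subset_biUnion_of_mem (fun j => (s j).support) hj
        have h3 : ∑ m ∈ (s j).support, (s j) m • m = ∑ m ∈ U, (s j) m • m :=
          Finset.sum_subset hsub fun m _ hm => by
            rw [Finsupp.notMem_support_iff.mp hm, zero_smul]
        rw [← h3]
        exact h2
      calc ∑ m ∈ U, ((s j m : cycles D) : R) * ((m : cycles D) : R)
          = (((∑ m ∈ U, (s j) m • m : I) : cycles D) : R) := by
            rw [AddSubmonoidClass.coe_finset_sum, AddSubmonoidClass.coe_finset_sum]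
            exact Finset.sum_congr rfl fun m _ => rfl
        _ = ((j : cycles D) : R) := by rw [h1]
    have hkey : x = ∑ m ∈ U, α m * ((m : cycles D) : R) := by
      calc x = ∑ j ∈ c.support, c j * ((j : cycles D) : R) := by
            rw [← hc]; exact Finset.sum_congr rfl fun j _ => rfl
        _ = ∑ j ∈ c.support, c j * (∑ m ∈ U, ((s j m : cycles D) : R) * ((m : cycles D) : R)) :=
            Finset.sum_congr rfl fun j hj => by rw [hinner j hj]
        _ = ∑ j ∈ c.support, ∑ m ∈ U, c j * (((s j m : cycles D) : R) * ((m : cycles D) : R)) :=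
            Finset.sum_congr rfl fun j _ => Finset.mul_sum _ _ _
        _ = ∑ m ∈ U, ∑ j ∈ c.support, c j * (((s j m : cycles D) : R) * ((m : cycles D) : R)) :=
            Finset.sum_comm
        _ = ∑ m ∈ U, α m * ((m : cycles D) : R) := by
            refine Finset.sum_congr rfl fun m _ => ?_
            rw [hα, Finset.sum_mul]
            exact Finset.sum_congr rfl fun j _ => (mul_assoc _ _ _).symm
    refine ⟨∑ m ∈ U, (⟨α m, hαc m⟩ : cycles D) * (m : cycles D), ?_, ?_⟩
    · exact I.sum_mem fun m _ => I.mul_mem_left _ m.2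
    · rw [AddSubmonoidClass.coe_finset_sum]
      have : ∑ m ∈ U, (((⟨α m, hαc m⟩ : cycles D) * (m : cycles D) : cycles D) : R)
          = ∑ m ∈ U, α m * ((m : cycles D) : R) :=
        Finset.sum_congr rfl fun m _ => rfl
      rw [this]
      exact hkey.symm
  · rintro ⟨y, hyI, rfl⟩
    exact ⟨D.d_coe_cycle y, Submodule.subset_span ⟨y, hyI, rfl⟩⟩
end
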